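/- arXiv:1702.06121 — 2 statements merged into one kernel-verified Lean document; each statement's English description precedes it below -/
import Mathlib

section
/- Let m, n ∈ ℕ, r_1,…,r_n, c_1,…,c_m ∈ ℕ₀, and let Z ⊆ [m]×[n] be a set of positions forced to zero. If there exists a real matrix x with entries x_{p,q} ∈ [0,1], (p,q) ∈ [m]×[n], satisfying x_{p,q} = 0 for all (p,q) ∈ Z, Σ_{p∈[m]} x_{p,q} = r_q for all q ∈ [n], and Σ_{q∈[n]} x_{p,q} = c_p for all p ∈ [m], then there exists a matrix with all entries in {0,1} satisfying the same constraints. -/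
/-!
Induction on the number of fractional entries. These form the edges of a bipartite graph
between rows and columns, and since every line sum is an integer no line contains exactly one
of them; hence the graph has at least as many edges as vertices. As the incidence map into the
vertex space lands in the kernel of "sum over rows minus sum over columns", it has a nonzero
kernel: a nonzero perturbation `d` of the fractional entries with vanishing line sums.
Moving along `d` until the first entry hits `0` or `1` keeps all constraints and makes one more
entry integral.
-/

open scoped Classical

/-- The grid `[m] × [n] = {1,…,m} × {1,…,n}`. -/
def gridIcc (m n : ℕ) : Finset (ℕ × ℕ) := Finset.Icc 1 m ×ˢ Finset.Icc 1 n

open Finset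

theorem eq_zero_or_eq_one_of_mem_Icc_of_notMem_Ioo {y : ℝ} (h : y ∈ Set.Icc 0 1)
    (h' : y ∉ Set.Ioo 0 1) : y = 0 ∨ y = 1 := by
  simpa [Set.Icc_sdiff_Ioo_same] using Set.mem_sdiff_of_mem h h'

theorem card_filter_mem_Ioo_ne_one {ι : Type*} (s : Finset ι) (y : ι → ℝ)
    (hy : ∀ i ∈ s, y i ∈ Set.Icc 0 1) (k : ℤ) (hsum : ∑ i ∈ s, y i = k) :
    #{i ∈ s | y i ∈ Set.Ioo 0 1} ≠ 1 := by
  intro h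
  obtain ⟨i₀, hi₀⟩ := card_eq_one.mp h
  have hi₀s : i₀ ∈ s ∧ y i₀ ∈ Set.Ioo 0 1 :=
    mem_filter.mp (hi₀ ▸ mem_singleton_self i₀)
  have hrest : ∀ j ∈ s.erase i₀, y j = if y j = 1 then 1 else 0 := by
    intro j hj
    have hj' : y j ∉ Set.Ioo 0 1 := fun hIoo =>
      ne_of_mem_erase hj (mem_singleton.mp (hi₀ ▸ mem_filter.mpr ⟨mem_of_mem_erase hj, hIoo⟩))
    rcases eq_zero_or_eq_one_of_mem_Icc_of_notMem_Ioo (hy j (mem_of_mem_erase hj)) hj' with h | h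
      <;> simp [h]
  have hyi₀ : y i₀ = ((k - #{j ∈ s.erase i₀ | y j = 1} : ℤ) : ℝ) := by
    rw [Int.cast_sub, Int.cast_natCast, natCast_card_filter, ← sum_congr rfl hrest, ← hsum,
      ← add_sum_erase s y hi₀s.1, add_sub_cancel_right]
  obtain ⟨h0, h1⟩ := hyi₀ ▸ hi₀s.2
  have h0' := Int.cast_pos.mp h0
  have h1' : k - #{j ∈ s.erase i₀ | y j = 1} < 1 := by exact_mod_cast h1
  omega

theorem exists_add_mul_mem_Icc_and_eq_zero_or_one {ι : Type*} (S : Finset ι) (x d : ι → ℝ)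
    (hx : ∀ i ∈ S, x i ∈ Set.Ioo 0 1) (hd : ∃ i ∈ S, d i ≠ 0) :
    ∃ t : ℝ, (∀ i ∈ S, x i + t * d i ∈ Set.Icc 0 1) ∧
      ∃ i ∈ S, x i + t * d i = 0 ∨ x i + t * d i = 1 := by
  -- the step after which coordinate `i` leaves `[0, 1]`
  let τ : ι → ℝ := fun i => if 0 < d i then (1 - x i) / d i else -x i / d i
  obtain ⟨i₀, hi₀, hmin⟩ := (S.filter fun i => d i ≠ 0).exists_min_image τ
    (by obtain ⟨i, hi, hdi⟩ := hd; exact ⟨i, mem_filter.mpr ⟨hi, hdi⟩⟩)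
  obtain ⟨hi₀S, hdi₀⟩ := mem_filter.mp hi₀
  refine ⟨τ i₀, fun i hi => ?_, i₀, hi₀S, ?_⟩
  · obtain ⟨hx0, hx1⟩ := hx i hi
    obtain ⟨hx0', hx1'⟩ := hx i₀ hi₀S
    have hτ₀ : 0 < τ i₀ := by
      simp only [τ]; split_ifs with h
      · exact div_pos (by linarith) h
      · exact div_pos_of_neg_of_neg (by linarith) (lt_of_le_of_ne (not_lt.mp h) hdi₀)
    rcases lt_trichotomy (d i) 0 with hneg | hzero | hpos
    · have := hmin i (mem_filter.mpr ⟨hi, hneg.ne⟩)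
      simp only [τ, if_neg hneg.not_gt, le_div_iff_of_neg hneg] at this
      constructor <;> nlinarith
    · simp [hzero, hx0.le, hx1.le]
    · have := hmin i (mem_filter.mpr ⟨hi, hpos.ne'⟩)
      simp only [τ, if_pos hpos, le_div_iff₀ hpos] at this
      constructor <;> nlinarith
  · simp only [τ]
    split_ifs
    · right; field_simp; ring
    · left; field_simp; ring

theorem Finset.two_mul_card_image_le_card {ι ρ : Type*} [DecidableEq ρ] (F : Finset ι)
    (f : ι → ρ) (hf : ∀ a, #{i ∈ F | f i = a} ≠ 1) : 2 * #(F.image f) ≤ #F := by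
  rw [card_eq_sum_card_fiberwise (f := f) (t := F.image f) fun i hi => mem_image_of_mem f hi,
    mul_comm, ← smul_eq_mul, ← sum_const]
  refine sum_le_sum fun a ha => ?_
  obtain ⟨i, hi, rfl⟩ := mem_image.mp ha
  have : 0 < #{j ∈ F | f j = f i} := card_pos.mpr ⟨i, mem_filter.mpr ⟨hi, rfl⟩⟩
  have := hf (f i)
  omega

theorem LinearMap.ker_ne_bot_of_comp_eq_zero {K V W : Type*} [DivisionRing K]
    [AddCommGroup V] [Module K V] [FiniteDimensional K V]
    [AddCommGroup W] [Module K W] [FiniteDimensional K W]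
    (f : V →ₗ[K] W) (φ : W →ₗ[K] K) (hφ : φ ≠ 0) (hφf : φ ∘ₗ f = 0)
    (hdim : Module.finrank K W ≤ Module.finrank K V) : ker f ≠ ⊥ := by
  have hker : ker φ ≠ ⊤ := fun h => hφ (ker_eq_top.mp h)
  have hf : ∀ v, f v ∈ ker φ := fun v => LinearMap.congr_fun hφf v
  simpa only [ker_codRestrict] using
    ker_ne_bot_of_finrank_lt (f := f.codRestrict (ker φ) hf)
      ((Submodule.finrank_lt hker).trans_le hdim)

theorem exists_ne_zero_fiber_sums_eq_zero {K ι ρ κ : Type*} [DivisionRing K] [DecidableEq ρ]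
    [DecidableEq κ] (F : Finset ι) (row : ι → ρ) (col : ι → κ) (hF : F.Nonempty)
    (hrow : ∀ a, #{i ∈ F | row i = a} ≠ 1) (hcol : ∀ b, #{i ∈ F | col i = b} ≠ 1) :
    ∃ d : ι → K, (∀ i ∉ F, d i = 0) ∧ (∃ i ∈ F, d i ≠ 0) ∧
      (∀ a, ∑ i ∈ F with row i = a, d i = 0) ∧ ∀ b, ∑ i ∈ F with col i = b, d i = 0 := by
  set R := F.image row
  set C := F.image col
  let fiberSums : (ι → K) →ₗ[K] (R → K) × (C → K) :=
    { toFun d := (fun a => ∑ i ∈ F with row i = a, d i, fun b => ∑ i ∈ F with col i = b, d i)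
      map_add' d e := by ext <;> simp [sum_add_distrib]
      map_smul' c d := by ext <;> simp [mul_sum] }
  let φ : (R → K) × (C → K) →ₗ[K] K :=
    { toFun u := ∑ a, u.1 a - ∑ b, u.2 b
      map_add' u v := by
        simp only [Prod.fst_add, Prod.snd_add, Pi.add_apply, sum_add_distrib]; abel
      map_smul' c u := by
        simp only [Prod.smul_fst, Prod.smul_snd, Pi.smul_apply, smul_eq_mul, RingHom.id_apply,
          ← mul_sum, mul_sub] }
  have hφ : φ ≠ 0 := by
    obtain ⟨i, hi⟩ := hF
    intro h
    simpa [φ] using LinearMap.congr_fun h (Pi.single ⟨row i, mem_image_of_mem row hi⟩ 1, 0)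
  -- every entry is counted once among the row sums and once among the column sums
  have hφf : ∀ d, φ (fiberSums d) = 0 := by
    intro d
    change ∑ a : R, ∑ i ∈ F with row i = a, d i - ∑ b : C, ∑ i ∈ F with col i = b, d i = 0
    rw [sum_coe_sort R fun a => ∑ i ∈ F with row i = a, d i,
      sum_coe_sort C fun b => ∑ i ∈ F with col i = b, d i,
      sum_fiberwise_of_maps_to (fun i hi => mem_image_of_mem row hi),
      sum_fiberwise_of_maps_to (fun i hi => mem_image_of_mem col hi), sub_self]
  let extend := Function.ExtendByZero.linearMap K ((↑) : F → ι)
  have hker : LinearMap.ker (fiberSums ∘ₗ extend) ≠ ⊥ := by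
    refine LinearMap.ker_ne_bot_of_comp_eq_zero _ φ hφ (LinearMap.ext fun g => hφf _) ?_
    simp only [Module.finrank_prod, Module.finrank_fintype_fun_eq_card, Fintype.card_coe]
    have hR : 2 * #R ≤ #F := F.two_mul_card_image_le_card row hrow
    have hC : 2 * #C ≤ #F := F.two_mul_card_image_le_card col hcol
    omega
  obtain ⟨g, hgker, hg⟩ := Submodule.exists_mem_ne_zero_of_ne_bot hker
  obtain ⟨j, hj⟩ := Function.ne_iff.mp hg
  have hsums : fiberSums (extend g) = 0 := hgker
  refine ⟨extend g, fun i hi => ?_, ⟨j, j.2, ?_⟩, fun a => ?_, fun b => ?_⟩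
  · exact Function.extend_apply' _ _ _ fun ⟨j, hj⟩ => hi (hj ▸ j.2)
  · simpa [extend, Subtype.val_injective.extend_apply] using hj
  · by_cases ha : a ∈ R
    · exact congrFun (congrArg Prod.fst hsums) ⟨a, ha⟩
    · exact sum_eq_zero fun i hi => absurd (mem_filter.mp hi) fun ⟨hiF, hia⟩ =>
        ha (hia ▸ mem_image_of_mem row hiF)
  · by_cases hb : b ∈ C
    · exact congrFun (congrArg Prod.snd hsums) ⟨b, hb⟩
    · exact sum_eq_zero fun i hi => absurd (mem_filter.mp hi) fun ⟨hiF, hib⟩ =>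
        hb (hib ▸ mem_image_of_mem col hiF)

section FiberSums

variable {ι ρ κ : Type*} [DecidableEq ρ] [DecidableEq κ] (F : Finset ι) (row : ι → ρ)
  (col : ι → κ)

theorem card_filter_fiber_mem_Ioo_ne_one (x : ι → ℝ) (hx : ∀ i ∈ F, x i ∈ Set.Icc 0 1)
    (hrow : ∀ a, ∃ k : ℤ, ∑ i ∈ F with row i = a, x i = k) (a : ρ) :
    #{i ∈ {i ∈ F | x i ∈ Set.Ioo 0 1} | row i = a} ≠ 1 := by
  obtain ⟨k, hk⟩ := hrow a
  rw [filter_comm]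
  exact card_filter_mem_Ioo_ne_one _ x (fun i hi => hx i (mem_filter.mp hi).1) k hk

theorem exists_fewer_fractional (x : ι → ℝ) (hx : ∀ i ∈ F, x i ∈ Set.Icc 0 1)
    (hrow : ∀ a, ∃ k : ℤ, ∑ i ∈ F with row i = a, x i = k)
    (hcol : ∀ b, ∃ k : ℤ, ∑ i ∈ F with col i = b, x i = k)
    (hfrac : {i ∈ F | x i ∈ Set.Ioo 0 1}.Nonempty) :
    ∃ x' : ι → ℝ, (∀ i ∈ F, x' i ∈ Set.Icc 0 1) ∧ (∀ i, x i = 0 → x' i = 0) ∧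
      (∀ a, ∑ i ∈ F with row i = a, x' i = ∑ i ∈ F with row i = a, x i) ∧
      (∀ b, ∑ i ∈ F with col i = b, x' i = ∑ i ∈ F with col i = b, x i) ∧
      #{i ∈ F | x' i ∈ Set.Ioo 0 1} < #{i ∈ F | x i ∈ Set.Ioo 0 1} := by
  set S := {i ∈ F | x i ∈ Set.Ioo 0 1}
  have hSF : S ⊆ F := filter_subset _ _
  obtain ⟨d, hdS, ⟨j, hjS, hdj⟩, hdrow, hdcol⟩ := exists_ne_zero_fiber_sums_eq_zero (K := ℝ) S
    row col hfrac (card_filter_fiber_mem_Ioo_ne_one F row x hx hrow)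
    (card_filter_fiber_mem_Ioo_ne_one F col x hx hcol)
  obtain ⟨t, htS, i₀, hi₀S, hi₀⟩ := exists_add_mul_mem_Icc_and_eq_zero_or_one S x d
    (fun i hi => (mem_filter.mp hi).2) ⟨j, hjS, hdj⟩
  have hx'_eq : ∀ i ∉ S, x i + t * d i = x i := fun i hi => by rw [hdS i hi, mul_zero, add_zero]
  have hfiber : ∀ (p : ι → Prop) [DecidablePred p], ∑ i ∈ S with p i, d i = 0 →
      ∑ i ∈ F with p i, (x i + t * d i) = ∑ i ∈ F with p i, x i := by
    intro p _ h
    rw [sum_add_distrib, ← mul_sum, ← sum_subset (filter_subset_filter _ hSF)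
      fun i hiF hi => hdS i fun hiS => hi (mem_filter.mpr ⟨hiS, (mem_filter.mp hiF).2⟩), h,
      mul_zero, add_zero]
  refine ⟨fun i => x i + t * d i, fun i hi => ?_, fun i hi => ?_, fun a => hfiber _ (hdrow a),
    fun b => hfiber _ (hdcol b), card_lt_card ?_⟩
  · by_cases hiS : i ∈ S
    · exact htS i hiS
    · simpa only [hx'_eq i hiS] using hx i hi
  · have hiS : i ∉ S := fun hiS => (mem_filter.mp hiS).2.1.ne' hi
    exact (hx'_eq i hiS).trans hi
  · refine Finset.ssubset_of_subset_of_ssubset (fun i hi => ?_) (erase_ssubset hi₀S)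
    obtain ⟨hiF, hi⟩ := mem_filter.mp hi
    have hiS : i ∈ S := by
      by_contra hiS
      exact hiS (mem_filter.mpr ⟨hiF, hx'_eq i hiS ▸ hi⟩)
    refine mem_erase.mpr ⟨fun h => ?_, hiS⟩
    subst h
    rcases hi₀ with h | h <;> simp [h] at hi

theorem exists_zero_one_of_mem_Icc (x : ι → ℝ) (hx : ∀ i ∈ F, x i ∈ Set.Icc 0 1)
    (hrow : ∀ a, ∃ k : ℤ, ∑ i ∈ F with row i = a, x i = k)
    (hcol : ∀ b, ∃ k : ℤ, ∑ i ∈ F with col i = b, x i = k) :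
    ∃ ξ : ι → ℝ, (∀ i ∈ F, ξ i = 0 ∨ ξ i = 1) ∧ (∀ i, x i = 0 → ξ i = 0) ∧
      (∀ a, ∑ i ∈ F with row i = a, ξ i = ∑ i ∈ F with row i = a, x i) ∧
      (∀ b, ∑ i ∈ F with col i = b, ξ i = ∑ i ∈ F with col i = b, x i) := by
  induction hn : #{i ∈ F | x i ∈ Set.Ioo 0 1} using Nat.strong_induction_on generalizing x with
  | _ n ih =>
    rcases eq_empty_or_nonempty {i ∈ F | x i ∈ Set.Ioo 0 1} with hfrac | hfrac
    · refine ⟨x, fun i hi => eq_zero_or_eq_one_of_mem_Icc_of_notMem_Ioo (hx i hi) fun h => ?_,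
        fun _ h => h, fun _ => rfl, fun _ => rfl⟩
      exact (eq_empty_iff_forall_notMem.mp hfrac) i (mem_filter.mpr ⟨hi, h⟩)
    obtain ⟨x', hx', hzero, hrow', hcol', hlt⟩ :=
      exists_fewer_fractional F row col x hx hrow hcol hfrac
    obtain ⟨ξ, hξ, hξzero, hξrow, hξcol⟩ := ih _ (hn ▸ hlt) x' hx'
      (fun a => hrow' a ▸ hrow a) (fun b => hcol' b ▸ hcol b) rfl
    exact ⟨ξ, hξ, fun i hi => hξzero i (hzero i hi), fun a => (hξrow a).trans (hrow' a),
      fun b => (hξcol b).trans (hcol' b)⟩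

end FiberSums

theorem sum_filter_fst_product_eq {α β M : Type*} [DecidableEq α] [AddCommMonoid M]
    (s : Finset α) (t : Finset β) (f : α × β → M) (a : α) :
    ∑ e ∈ s ×ˢ t with e.1 = a, f e = if a ∈ s then ∑ b ∈ t, f (a, b) else 0 := by
  rw [filter_product_left (· = a), filter_eq' s a]
  split_ifs <;> simp

theorem sum_filter_snd_product_eq {α β M : Type*} [DecidableEq β] [AddCommMonoid M]
    (s : Finset α) (t : Finset β) (f : α × β → M) (b : β) :
    ∑ e ∈ s ×ˢ t with e.2 = b, f e = if b ∈ t then ∑ a ∈ s, f (a, b) else 0 := by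
  rw [filter_product_right (· = b), filter_eq' t b]
  split_ifs <;> simp

theorem stmt14_general (m n : ℕ)
    (r c : ℕ → ℕ) (Z : Set (ℕ × ℕ))
    (x : ℕ × ℕ → ℝ)
    (hx01 : ∀ p ∈ gridIcc m n, 0 ≤ x p ∧ x p ≤ 1)
    (hxZ : ∀ p ∈ Z, x p = 0)
    (hxrow : ∀ q ∈ Finset.Icc 1 n, ∑ p ∈ Finset.Icc 1 m, x (p, q) = (r q : ℝ))
    (hxcol : ∀ p ∈ Finset.Icc 1 m, ∑ q ∈ Finset.Icc 1 n, x (p, q) = (c p : ℝ)) :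
    ∃ ξ : ℕ × ℕ → ℝ,
      (∀ p ∈ gridIcc m n, ξ p = 0 ∨ ξ p = 1) ∧
      (∀ p ∈ Z, ξ p = 0) ∧
      (∀ q ∈ Finset.Icc 1 n, ∑ p ∈ Finset.Icc 1 m, ξ (p, q) = (r q : ℝ)) ∧
      (∀ p ∈ Finset.Icc 1 m, ∑ q ∈ Finset.Icc 1 n, ξ (p, q) = (c p : ℝ)) := by
  have hcolInt : ∀ p, ∃ k : ℤ, ∑ e ∈ gridIcc m n with e.1 = p, x e = k := fun p => by
    rw [gridIcc, sum_filter_fst_product_eq]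
    split_ifs with hp
    exacts [⟨c p, by rw [hxcol p hp]; norm_cast⟩, ⟨0, by simp⟩]
  have hrowInt : ∀ q, ∃ k : ℤ, ∑ e ∈ gridIcc m n with e.2 = q, x e = k := fun q => by
    rw [gridIcc, sum_filter_snd_product_eq]
    split_ifs with hq
    exacts [⟨r q, by rw [hxrow q hq]; norm_cast⟩, ⟨0, by simp⟩]
  obtain ⟨ξ, hξ, hξzero, hξcol, hξrow⟩ :=
    exists_zero_one_of_mem_Icc (gridIcc m n) Prod.fst Prod.snd x hx01 hcolInt hrowInt
  refine ⟨ξ, hξ, fun p hp => hξzero p (hxZ p hp), fun q hq => ?_, fun p hp => ?_⟩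
  · have := hξrow q
    rwa [gridIcc, sum_filter_snd_product_eq, sum_filter_snd_product_eq, if_pos hq, if_pos hq,
      hxrow q hq] at this
  · have := hξcol p
    rwa [gridIcc, sum_filter_fst_product_eq, sum_filter_fst_product_eq, if_pos hp, if_pos hp,
      hxcol p hp] at this

/-- if the LP relaxation of the reconstruction problem with prescribed row and
column sums and positions `Z` forced to zero has a fractional solution with entries in `[0,1]`,
then it has a solution with entries in `{0,1}`. -/
theorem stmt14 (m n : ℕ) (hm : 0 < m) (hn : 0 < n)
    (r c : ℕ → ℕ) (Z : Set (ℕ × ℕ)) (hZ : Z ⊆ ↑(gridIcc m n))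
    (x : ℕ × ℕ → ℝ)
    (hx01 : ∀ p ∈ gridIcc m n, 0 ≤ x p ∧ x p ≤ 1)
    (hxZ : ∀ p ∈ Z, x p = 0)
    (hxrow : ∀ q ∈ Finset.Icc 1 n, ∑ p ∈ Finset.Icc 1 m, x (p, q) = (r q : ℝ))
    (hxcol : ∀ p ∈ Finset.Icc 1 m, ∑ q ∈ Finset.Icc 1 n, x (p, q) = (c p : ℝ)) :
    ∃ ξ : ℕ × ℕ → ℝ,
      (∀ p ∈ gridIcc m n, ξ p = 0 ∨ ξ p = 1) ∧
      (∀ p ∈ Z, ξ p = 0) ∧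
      (∀ q ∈ Finset.Icc 1 n, ∑ p ∈ Finset.Icc 1 m, ξ (p, q) = (r q : ℝ)) ∧
      (∀ p ∈ Finset.Icc 1 m, ∑ q ∈ Finset.Icc 1 n, ξ (p, q) = (c p : ℝ)) :=
  stmt14_general m n r c Z x hx01 hxZ hxrow hxcol
end

section
/- Let m, n ∈ 2ℕ, let I ⊆ C(m,n,2), and let r_{j+l} ∈ ℕ₀ (j ∈ Π_y(I), l ∈ {0,1}) and c_{i+l} ∈ ℕ₀ (i ∈ Π_x(I), l ∈ {0,1}) satisfy the consistency conditions r_j + r_{j+1} = ρ_j(m) and c_i + c_{i+1} = σ_i(n) for every (i,j) ∈ I. For (i,j) ∈ I define a_{i,j} := i + min{l ∈ {0,1} : σ_i(j) ≤ Σ_{h=0}^{l} c_{i+h}} and b_{i,j} := j + min{l ∈ {0,1} : ρ_j(i) ≤ Σ_{h=0}^{l} r_{j+h}}, and define ξ*_{p,q} for (p,q) ∈ G(I) by ξ*_{p,q} := 1 if (p,q) = (a_{i,j}, b_{i,j}) for the block B_2(i,j) containing (p,q), and ξ*_{p,q} := 0 otherwise. Then ξ* is a solution of the DR(1) instance: Σ_{p:(p,j)∈G(I)}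 ξ*_{p,j+l} = r_{j+l} for all j ∈ Π_y(I), l ∈ {0,1}; Σ_{q:(i,q)∈G(I)} ξ*_{i+l,q} = c_{i+l} for all i ∈ Π_x(I), l ∈ {0,1}; and Σ_{(p,q)∈B_2(i,j)} ξ*_{p,q} = 1 for all (i,j) ∈ I. -/
open scoped Classical

/-- The corner points `C(m,n,2) = ([m] × [n]) ∩ (2ℕ₀+1)²`. -/
def cornerPts (m n k : ℕ) : Finset (ℕ × ℕ) :=
  (gridIcc m n).filter fun p => p.1 % k = 1 % k ∧ p.2 % k = 1 % k

/-- The block `B_k(i,j) = {(i+a, j+b) : a, b ∈ [k-1]₀}`. -/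
def blockF (k i j : ℕ) : Finset (ℕ × ℕ) :=
  Finset.Icc i (i + k - 1) ×ˢ Finset.Icc j (j + k - 1)

/-- `G(I) = ⋃_{(i,j) ∈ I} B_2(i,j)`. -/
def GofI (k : ℕ) (I : Finset (ℕ × ℕ)) : Finset (ℕ × ℕ) :=
  I.biUnion fun p => blockF k p.1 p.2

/-- `Π_x(I)`, the projection of `I` onto the first coordinate. -/
def PiX (I : Finset (ℕ × ℕ)) : Finset ℕ := I.image Prod.fst

/-- `Π_y(I)`, the projection of `I` onto the second coordinate. -/
def PiY (I : Finset (ℕ × ℕ)) : Finset ℕ := I.image Prod.snd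

/-- `σ_i(j) = |({i} × [j]) ∩ I|`. -/
def sigmaI (I : Finset (ℕ × ℕ)) (i j : ℕ) : ℕ :=
  (I.filter fun z => z.1 = i ∧ z.2 ∈ Finset.Icc 1 j).card

/-- `ρ_j(i) = |([i] × {j}) ∩ I|`. -/
def rhoI (I : Finset (ℕ × ℕ)) (j i : ℕ) : ℕ :=
  (I.filter fun z => z.1 ∈ Finset.Icc 1 i ∧ z.2 = j).card

/-- `a_{i,j} = i + min{l ∈ {0,1} : σ_i(j) ≤ Σ_{h=0}^{l} c_{i+h}}`. -/
def aCorner (I : Finset (ℕ × ℕ)) (c : ℕ → ℕ) (i j : ℕ) : ℕ :=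
  if sigmaI I i j ≤ c i then i else i + 1

/-- `b_{i,j} = j + min{l ∈ {0,1} : ρ_j(i) ≤ Σ_{h=0}^{l} r_{j+h}}`. -/
def bCorner (I : Finset (ℕ × ℕ)) (r : ℕ → ℕ) (i j : ℕ) : ℕ :=
  if rhoI I j i ≤ r j then j else j + 1

/-- The (odd) corner coordinate of the `2 × 2` block containing coordinate `p`. -/
def cnr (p : ℕ) : ℕ := if p % 2 = 1 then p else p - 1

/-- The canonical solution `ξ*`: `ξ*_{p,q} = 1` iff `(p,q) = (a_{i,j}, b_{i,j})` for the block
`B_2(i,j)` containing `(p,q)`. -/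
def xiStar (I : Finset (ℕ × ℕ)) (r c : ℕ → ℕ) (z : ℕ × ℕ) : ℕ :=
  if z.1 = aCorner I c (cnr z.1) (cnr z.2) ∧ z.2 = bCorner I r (cnr z.1) (cnr z.2) then 1 else 0

/-! In a row `j` of blocks, order the blocks of `I` by their first coordinate; the block at
`(i, j)` has rank `ρ_j(i)`, and `b_{i,j}` puts its `1` into row `j` exactly when this rank is at
most `r_j`. Ranks run through `1, …, ρ_j(m)` without repetition, so row `j` receives
`min(r_j, ρ_j(m)) = r_j` ones and row `j + 1` the remaining `ρ_j(m) - r_j = r_{j+1}`.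
Column sums are row sums of the transposed instance, and each block holds a single `1`
because `a_{i,j}` and `b_{i,j}` each pick one of the two coordinates of the block. -/

open Finset

theorem card_filter_rank_le {α : Type*} [LinearOrder α] (S : Finset α) (t : ℕ) :
    #{i ∈ S | #{s ∈ S | s ≤ i} ≤ t} = min t #S := by
  induction S using Finset.induction_on_max with
  | empty => simp
  | insert a s hlt ih =>
    have has : a ∉ s := fun h => lt_irrefl a (hlt a h)
    have hrank : ∀ i ∈ s, #{x ∈ insert a s | x ≤ i} = #{x ∈ s | x ≤ i} := fun i hi => by
      rw [filter_insert, if_neg (not_le.2 (hlt i hi))]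
    have htop : #{x ∈ insert a s | x ≤ a} = #s + 1 := by
      rw [filter_insert, if_pos le_rfl, filter_true_of_mem fun x hx => (hlt x hx).le,
        card_insert_of_notMem has]
    rw [filter_insert, htop, filter_congr fun i hi => by rw [hrank i hi],
      card_insert_of_notMem has]
    split_ifs
    · rw [card_insert_of_notMem (by simp [has])]; simp only [ih]; omega
    · simp only [ih]; omega

theorem mem_cornerPts_two {m n : ℕ} {w : ℕ × ℕ} :
    w ∈ cornerPts m n 2 ↔ 1 ≤ w.1 ∧ w.1 ≤ m ∧ 1 ≤ w.2 ∧ w.2 ≤ n ∧ w.1 % 2 = 1 ∧ w.2 % 2 = 1 := by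
  simp [cornerPts, gridIcc, and_assoc]

theorem blockF_two (p q : ℕ) :
    blockF 2 p q = (range 2 ×ˢ range 2).image fun x => (p + x.1, q + x.2) := by
  ext ⟨x, y⟩
  simp only [blockF, mem_product, mem_Icc, mem_image, mem_range, Prod.mk.injEq, Prod.exists]
  constructor
  · rintro ⟨⟨hx, hx'⟩, hy, hy'⟩
    exact ⟨x - p, y - q, ⟨by omega, by omega⟩, by omega, by omega⟩
  · rintro ⟨a, b, ⟨ha, hb⟩, rfl, rfl⟩
    omega

theorem cnr_add_of_odd {p a : ℕ} (hp : p % 2 = 1) (ha : a < 2) : cnr (p + a) = p := by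
  unfold cnr
  split <;> omega

theorem aCorner_eq_or (I : Finset (ℕ × ℕ)) (c : ℕ → ℕ) (i j : ℕ) :
    aCorner I c i j = i ∨ aCorner I c i j = i + 1 := by
  unfold aCorner
  split <;> simp

theorem bCorner_eq_or (I : Finset (ℕ × ℕ)) (r : ℕ → ℕ) (i j : ℕ) :
    bCorner I r i j = j ∨ bCorner I r i j = j + 1 := by
  unfold bCorner
  split <;> simp

theorem xiStar_add (I : Finset (ℕ × ℕ)) (r c : ℕ → ℕ) {p q a b : ℕ} (hp : p % 2 = 1)
    (hq : q % 2 = 1) (ha : a < 2) (hb : b < 2) :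
    xiStar I r c (p + a, q + b) =
      if p + a = aCorner I c p q ∧ q + b = bCorner I r p q then 1 else 0 := by
  simp only [xiStar, cnr_add_of_odd hp ha, cnr_add_of_odd hq hb]

theorem sum_xiStar_blockF (I : Finset (ℕ × ℕ)) (r c : ℕ → ℕ) {p q : ℕ} (hp : p % 2 = 1)
    (hq : q % 2 = 1) : ∑ z ∈ blockF 2 p q, xiStar I r c z = 1 := by
  rw [blockF_two, sum_image fun x _ y _ h => by
    simp only [Prod.mk.injEq] at h; exact Prod.ext (by omega) (by omega), sum_product]
  rw [sum_congr rfl fun a ha => sum_congr rfl fun b hb =>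
    xiStar_add I r c hp hq (mem_range.1 ha) (mem_range.1 hb)]
  rcases aCorner_eq_or I c p q with h | h <;> rcases bCorner_eq_or I r p q with h' | h' <;>
    simp [h, h', sum_range_succ]

def rowSet (I : Finset (ℕ × ℕ)) (j : ℕ) : Finset ℕ := (I.filter (·.2 = j)).image Prod.fst

@[simp]
theorem mem_rowSet {I : Finset (ℕ × ℕ)} {i j : ℕ} : i ∈ rowSet I j ↔ (i, j) ∈ I := by
  simp [rowSet]

theorem rhoI_eq_card_filter_rowSet {I : Finset (ℕ × ℕ)} (hI : ∀ w ∈ I, 1 ≤ w.1) (j i : ℕ) :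
    rhoI I j i = #{s ∈ rowSet I j | s ≤ i} := by
  rw [rowSet, filter_image, card_image_of_injOn, filter_filter]
  · refine congrArg card (filter_congr fun w hw => ?_)
    have := hI w hw
    simp only [mem_Icc]
    omega
  · intro a ha b hb h
    simp only [coe_filter, Set.mem_ofPred_eq] at ha hb
    exact Prod.ext h ((mem_filter.1 ha.1).2.trans (mem_filter.1 hb.1).2.symm)

theorem filter_snd_GofI_two {m n j : ℕ} {I : Finset (ℕ × ℕ)} (hI : I ⊆ cornerPts m n 2)
    (hj : j % 2 = 1) :
    (GofI 2 I).filter (fun z => z.2 = j) =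
      (rowSet I j ×ˢ range 2).image fun x => (x.1 + x.2, j) := by
  ext ⟨x, y⟩
  simp only [mem_filter, GofI, mem_biUnion, blockF, mem_product, mem_Icc, mem_image, mem_rowSet,
    mem_range, Prod.mk.injEq, Prod.exists]
  constructor
  · rintro ⟨⟨p, q, hpq, ⟨hx, hx'⟩, hy, hy'⟩, rfl⟩
    obtain ⟨-, -, -, -, -, hq⟩ := mem_cornerPts_two.1 (hI hpq)
    obtain rfl : q = y := by omega
    exact ⟨p, x - p, ⟨hpq, by omega⟩, by omega, rfl⟩
  · rintro ⟨p, a, ⟨hp, ha⟩, rfl, rfl⟩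
    exact ⟨⟨p, j, hp, ⟨by omega, by omega⟩, by omega⟩, rfl⟩

theorem card_filter_bCorner_eq {I : Finset (ℕ × ℕ)} {r : ℕ → ℕ} {j : ℕ}
    (hI : ∀ w ∈ I, 1 ≤ w.1) (hrow : #(rowSet I j) = r j + r (j + 1)) :
    ∀ l < 2, #{p ∈ rowSet I j | j + l = bCorner I r p j} = r (j + l) := by
  have hb (p : ℕ) : bCorner I r p j = if #{s ∈ rowSet I j | s ≤ p} ≤ r j then j else j + 1 := by
    rw [bCorner, rhoI_eq_card_filter_rowSet hI]
  have h0 : {p ∈ rowSet I j | j + 0 = bCorner I r p j} =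
      {p ∈ rowSet I j | #{s ∈ rowSet I j | s ≤ p} ≤ r j} :=
    filter_congr fun p _ => by rw [hb]; split_ifs with h <;> simp [h]
  have h1 : {p ∈ rowSet I j | j + 1 = bCorner I r p j} =
      {p ∈ rowSet I j | ¬#{s ∈ rowSet I j | s ≤ p} ≤ r j} :=
    filter_congr fun p _ => by rw [hb]; split_ifs with h <;> simp [h]
  have hrank := card_filter_rank_le (rowSet I j) (r j)
  have hsplit := card_filter_add_card_filter_not (s := rowSet I j)
    (fun p => #{s ∈ rowSet I j | s ≤ p} ≤ r j)
  intro l hl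
  interval_cases l
  · rw [h0, hrank, add_zero]
    omega
  · rw [h1]
    omega

theorem sum_xiStar_row {m n : ℕ} {I : Finset (ℕ × ℕ)} (hI : I ⊆ cornerPts m n 2) (r c : ℕ → ℕ)
    (hrow : ∀ w ∈ I, r w.2 + r (w.2 + 1) = rhoI I w.2 m) :
    ∀ j ∈ PiY I, ∀ l < 2,
      ∑ z ∈ (GofI 2 I).filter (fun z => z.2 = j), xiStar I r c (z.1, j + l) = r (j + l) := by
  intro j hj l hl
  obtain ⟨i, hij⟩ : ∃ i, (i, j) ∈ I := by simpa [PiY] using hj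
  have hpos (v) (hv : v ∈ I) : 1 ≤ v.1 := (mem_cornerPts_two.1 (hI hv)).1
  have hodd {p q : ℕ} (hpq : (p, q) ∈ I) : p % 2 = 1 ∧ q % 2 = 1 :=
    (mem_cornerPts_two.1 (hI hpq)).2.2.2.2
  have hcard : #(rowSet I j) = r j + r (j + 1) := by
    rw [hrow _ hij, rhoI_eq_card_filter_rowSet hpos, filter_true_of_mem]
    exact fun p hp => (mem_cornerPts_two.1 (hI (mem_rowSet.1 hp))).2.1
  have hpair : ∀ p ∈ rowSet I j, ∑ a ∈ range 2, xiStar I r c (p + a, j + l) =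
      if j + l = bCorner I r p j then 1 else 0 := by
    intro p hp
    have hp' := hodd (mem_rowSet.1 hp)
    rw [sum_congr rfl fun a ha => xiStar_add I r c hp'.1 hp'.2 (mem_range.1 ha) hl,
      sum_range_succ, sum_range_one]
    rcases aCorner_eq_or I c p j with h | h <;> simp [h]
  have hinj : Set.InjOn (fun x : ℕ × ℕ => (x.1 + x.2, j)) ↑(rowSet I j ×ˢ range 2) := by
    rintro ⟨p, a⟩ hpa ⟨p', a'⟩ hpa' h
    simp only [coe_product, Set.mem_prod, mem_coe, mem_rowSet, mem_range, Prod.mk.injEq] at *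
    have := (hodd hpa.1).1
    have := (hodd hpa'.1).1
    omega
  rw [filter_snd_GofI_two hI (hodd hij).2, sum_image hinj, sum_product, sum_congr rfl hpair,
    sum_boole, Nat.cast_id]
  exact card_filter_bCorner_eq hpos hcard l hl

theorem image_swap_subset_cornerPts {m n k : ℕ} {I : Finset (ℕ × ℕ)} (hI : I ⊆ cornerPts m n k) :
    I.image Prod.swap ⊆ cornerPts n m k := by
  intro w hw
  obtain ⟨v, hv, rfl⟩ := mem_image.1 hw
  have := hI hv
  simp only [cornerPts, gridIcc, mem_filter, mem_product] at this ⊢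
  exact ⟨⟨this.1.2, this.1.1⟩, this.2.2, this.2.1⟩

theorem rhoI_image_swap (I : Finset (ℕ × ℕ)) (j i : ℕ) :
    rhoI (I.image Prod.swap) j i = sigmaI I j i := by
  rw [rhoI, sigmaI, filter_image, card_image_of_injective _ Prod.swap_injective]
  exact congrArg card (filter_congr fun _ _ => and_comm)

theorem sigmaI_image_swap (I : Finset (ℕ × ℕ)) (i j : ℕ) :
    sigmaI (I.image Prod.swap) i j = rhoI I i j := by
  rw [rhoI, sigmaI, filter_image, card_image_of_injective _ Prod.swap_injective]
  exact congrArg card (filter_congr fun _ _ => and_comm)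

theorem xiStar_image_swap (I : Finset (ℕ × ℕ)) (r c : ℕ → ℕ) (p q : ℕ) :
    xiStar (I.image Prod.swap) c r (q, p) = xiStar I r c (p, q) := by
  simp only [xiStar, aCorner, bCorner, rhoI_image_swap, sigmaI_image_swap, and_comm]

theorem GofI_two_image_swap (I : Finset (ℕ × ℕ)) :
    GofI 2 (I.image Prod.swap) = (GofI 2 I).image Prod.swap := by
  ext ⟨x, y⟩
  simp only [GofI, blockF, mem_biUnion, mem_image, mem_product, mem_Icc, Prod.exists,
    Prod.swap_prod_mk, Prod.mk.injEq]
  constructor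
  · rintro ⟨a, b, ⟨p, q, hpq, rfl, rfl⟩, hx, hy⟩
    exact ⟨y, x, ⟨p, q, hpq, hy, hx⟩, rfl, rfl⟩
  · rintro ⟨a, b, ⟨p, q, hpq, ha, hb⟩, rfl, rfl⟩
    exact ⟨q, p, ⟨p, q, hpq, rfl, rfl⟩, hb, ha⟩

theorem PiY_image_swap (I : Finset (ℕ × ℕ)) : PiY (I.image Prod.swap) = PiX I := by
  rw [PiY, PiX, image_image]
  rfl

theorem sum_xiStar_col {m n : ℕ} {I : Finset (ℕ × ℕ)} (hI : I ⊆ cornerPts m n 2) (r c : ℕ → ℕ)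
    (hcol : ∀ w ∈ I, c w.1 + c (w.1 + 1) = sigmaI I w.1 n) :
    ∀ i ∈ PiX I, ∀ l < 2,
      ∑ z ∈ (GofI 2 I).filter (fun z => z.1 = i), xiStar I r c (i + l, z.2) = c (i + l) := by
  intro i hi l hl
  have hswap := sum_xiStar_row (image_swap_subset_cornerPts hI) c r
    (fun w hw => by
      obtain ⟨v, hv, rfl⟩ := mem_image.1 hw
      simpa [rhoI_image_swap] using hcol v hv)
    i (PiY_image_swap I ▸ hi) l hl
  rw [GofI_two_image_swap, filter_image, sum_image Prod.swap_injective.injOn] at hswap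
  simpa only [Prod.fst_swap, Prod.snd_swap, xiStar_image_swap] using hswap

theorem stmt15_general (m n : ℕ)
    (I : Finset (ℕ × ℕ)) (hI : I ⊆ cornerPts m n 2) (r c : ℕ → ℕ)
    (hcons : ∀ w ∈ I, r w.2 + r (w.2 + 1) = rhoI I w.2 m ∧
      c w.1 + c (w.1 + 1) = sigmaI I w.1 n) :
    (∀ j ∈ PiY I, ∀ l < 2,
      ∑ z ∈ (GofI 2 I).filter (fun z => z.2 = j), xiStar I r c (z.1, j + l) = r (j + l)) ∧
    (∀ i ∈ PiX I, ∀ l < 2,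
      ∑ z ∈ (GofI 2 I).filter (fun z => z.1 = i), xiStar I r c (i + l, z.2) = c (i + l)) ∧
    (∀ w ∈ I, ∑ z ∈ blockF 2 w.1 w.2, xiStar I r c z = 1) := by
  refine ⟨sum_xiStar_row hI r c fun w hw => (hcons w hw).1,
    sum_xiStar_col hI r c fun w hw => (hcons w hw).2, fun w hw => ?_⟩
  obtain ⟨-, -, -, -, hw1, hw2⟩ := mem_cornerPts_two.1 (hI hw)
  exact sum_xiStar_blockF I r c hw1 hw2

/-- under the consistency conditions `r_j + r_{j+1} = ρ_j(m)` and
`c_i + c_{i+1} = σ_i(n)` for all `(i,j) ∈ I`, the explicitly defined `ξ*` solves the `DR(1)`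
instance (row sums, column sums, and one `1` per block). -/
theorem stmt15 (m n : ℕ) (hm : 2 ∣ m) (hm0 : 0 < m) (hn : 2 ∣ n) (hn0 : 0 < n)
    (I : Finset (ℕ × ℕ)) (hI : I ⊆ cornerPts m n 2) (r c : ℕ → ℕ)
    (hcons : ∀ w ∈ I, r w.2 + r (w.2 + 1) = rhoI I w.2 m ∧
      c w.1 + c (w.1 + 1) = sigmaI I w.1 n) :
    (∀ j ∈ PiY I, ∀ l < 2,
      ∑ z ∈ (GofI 2 I).filter (fun z => z.2 = j), xiStar I r c (z.1, j + l) = r (j + l)) ∧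
    (∀ i ∈ PiX I, ∀ l < 2,
      ∑ z ∈ (GofI 2 I).filter (fun z => z.1 = i), xiStar I r c (i + l, z.2) = c (i + l)) ∧
    (∀ w ∈ I, ∑ z ∈ blockF 2 w.1 w.2, xiStar I r c z = 1) :=
  stmt15_general m n I hI r c hcons
end
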